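/- If ρ = Σ_{i=1}^m |ψ_i⟩⟨ψ_i| where the (unnormalized) vectors |ψ_i⟩ are linearly independent, and Ψ is the matrix with columns |ψ_i⟩, then for any unitary U = (U₁ U₂) partitioned into column blocks, the matrices ρ₁ = Ψ U₁ U₁† Ψ† and ρ₂ = Ψ U₂ U₂† Ψ† are positive semidefinite, satisfy ρ₁ + ρ₂ = ρ, supp(ρ₁) = span(Ψ U₁), supp(ρ₂) = span(Ψ U₂), and supp(ρ₁) ∩ supp(ρ₂) = {0}. -/

import Mathlib

/-!
Since `U` is unitary, its column blocks satisfy `U₁ U₁ᴴ + U₂ U₂ᴴ = U Uᴴ = 1`, `U₁ᴴ U₁ = 1` and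
`U₁ᴴ U₂ = 0`; the first identity splits `ρ`, and the last two make the column spaces of `U₁` and
`U₂` meet only in `0`. Each `ρᵢ = (Ψ Uᵢ)(Ψ Uᵢ)ᴴ` is a Gram matrix, hence positive semidefinite with
support the column space of `Ψ Uᵢ` (a rank count). Linear independence of the columns of `Ψ` makes
`Ψ` injective, so it carries the trivial intersection of column spaces over to the supports.
-/

open Matrix BigOperators ComplexOrder

noncomputable def colSpace {n m : ℕ} (A : Matrix (Fin n) (Fin m) ℂ) :
    Submodule ℂ (Fin n → ℂ) :=
  LinearMap.range A.mulVecLin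

/-- Support of a square matrix (for a PSD matrix, the orthocomplement of the kernel,
which equals its column space). -/
noncomputable def supp {n : ℕ} (A : Matrix (Fin n) (Fin n) ℂ) : Submodule ℂ (Fin n → ℂ) :=
  LinearMap.range A.mulVecLin

section Blocks

variable {R : Type*}

lemma conjTranspose_submatrix_mul_submatrix {m n p q : Type*} [Fintype m] [NonUnitalSemiring R]
    [StarRing R] (U : Matrix m n R) (e : p → n) (f : q → n) :
    (U.submatrix id e)ᴴ * U.submatrix id f = (Uᴴ * U).submatrix e f := by
  ext i j
  simp [mul_apply]

lemma submatrix_castAdd_mul_conjTranspose_add_submatrix_natAdd_mul_conjTranspose {m : Type*}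
    [NonUnitalSemiring R] [StarRing R] {k l : ℕ} (U : Matrix m (Fin (k + l)) R) :
    U.submatrix id (Fin.castAdd l) * (U.submatrix id (Fin.castAdd l))ᴴ +
      U.submatrix id (Fin.natAdd k) * (U.submatrix id (Fin.natAdd k))ᴴ = U * Uᴴ := by
  ext i j
  simp [mul_apply, Fin.sum_univ_add]

variable [CommRing R] [StarRing R] {k l : ℕ} {U : Matrix (Fin (k + l)) (Fin (k + l)) R}

lemma conjTranspose_submatrix_castAdd_mul_self (hU : U ∈ unitaryGroup (Fin (k + l)) R) :
    (U.submatrix id (Fin.castAdd l))ᴴ * U.submatrix id (Fin.castAdd l) = 1 := by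
  rw [conjTranspose_submatrix_mul_submatrix, ← star_eq_conjTranspose, mem_unitaryGroup_iff'.mp hU,
    submatrix_one _ (Fin.castAdd_injective k l)]

lemma conjTranspose_submatrix_castAdd_mul_submatrix_natAdd
    (hU : U ∈ unitaryGroup (Fin (k + l)) R) :
    (U.submatrix id (Fin.castAdd l))ᴴ * U.submatrix id (Fin.natAdd k) = 0 := by
  rw [conjTranspose_submatrix_mul_submatrix, ← star_eq_conjTranspose, mem_unitaryGroup_iff'.mp hU]
  ext i j
  exact one_apply_ne (Fin.ne_of_val_ne (by simp only [Fin.val_castAdd, Fin.val_natAdd]; omega))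

end Blocks

section ColumnSpaces

variable {n m p : ℕ}

lemma supp_mul_conjTranspose (A : Matrix (Fin n) (Fin m) ℂ) : supp (A * Aᴴ) = colSpace A := by
  refine Submodule.eq_of_le_of_finrank_eq ?_ (rank_self_mul_conjTranspose A)
  rw [supp, colSpace, mulVecLin_mul]
  exact LinearMap.range_comp_le_range _ _

lemma colSpace_mul (A : Matrix (Fin n) (Fin m) ℂ) (B : Matrix (Fin m) (Fin p) ℂ) :
    colSpace (A * B) = (colSpace B).map A.mulVecLin := by
  rw [colSpace, colSpace, mulVecLin_mul, LinearMap.range_comp]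

lemma disjoint_colSpace_of_conjTranspose_mul_eq_zero {q : ℕ} {A : Matrix (Fin n) (Fin p) ℂ}
    {B : Matrix (Fin n) (Fin q) ℂ} (hA : Aᴴ * A = 1) (hAB : Aᴴ * B = 0) :
    Disjoint (colSpace A) (colSpace B) := by
  rw [Submodule.disjoint_def]
  rintro _ ⟨a, rfl⟩ ⟨b, hb⟩
  simp only [mulVecLin_apply] at hb ⊢
  have ha : a = 0 := by
    simpa [mulVec_mulVec, hA, hAB] using congrArg (Aᴴ *ᵥ ·) hb.symm
  simp [ha]

end ColumnSpaces

theorem stmt_2 {n k l : ℕ} (Ψ : Matrix (Fin n) (Fin (k + l)) ℂ)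
    (hlin : LinearIndependent ℂ (fun j : Fin (k + l) => fun i : Fin n => Ψ i j))
    (ρ : Matrix (Fin n) (Fin n) ℂ) (hρ : ρ = Ψ * Ψᴴ)
    (U : Matrix (Fin (k + l)) (Fin (k + l)) ℂ)
    (hU : U ∈ Matrix.unitaryGroup (Fin (k + l)) ℂ)
    (U₁ : Matrix (Fin (k + l)) (Fin k) ℂ) (U₂ : Matrix (Fin (k + l)) (Fin l) ℂ)
    (hU₁ : U₁ = U.submatrix id (Fin.castAdd l))
    (hU₂ : U₂ = U.submatrix id (Fin.natAdd k))
    (ρ₁ ρ₂ : Matrix (Fin n) (Fin n) ℂ)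
    (hρ₁ : ρ₁ = Ψ * U₁ * U₁ᴴ * Ψᴴ) (hρ₂ : ρ₂ = Ψ * U₂ * U₂ᴴ * Ψᴴ) :
    ρ₁.PosSemidef ∧ ρ₂.PosSemidef ∧ ρ₁ + ρ₂ = ρ ∧
    supp ρ₁ = colSpace (Ψ * U₁) ∧ supp ρ₂ = colSpace (Ψ * U₂) ∧
    supp ρ₁ ⊓ supp ρ₂ = ⊥ := by
  have hgram₁ : ρ₁ = (Ψ * U₁) * (Ψ * U₁)ᴴ := by
    rw [hρ₁, conjTranspose_mul]; simp only [Matrix.mul_assoc]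
  have hgram₂ : ρ₂ = (Ψ * U₂) * (Ψ * U₂)ᴴ := by
    rw [hρ₂, conjTranspose_mul]; simp only [Matrix.mul_assoc]
  have hΨ : Function.Injective Ψ.mulVecLin := mulVec_injective_iff.mpr hlin
  refine ⟨hgram₁ ▸ posSemidef_self_mul_conjTranspose _,
    hgram₂ ▸ posSemidef_self_mul_conjTranspose _, ?_,
    hgram₁ ▸ supp_mul_conjTranspose _, hgram₂ ▸ supp_mul_conjTranspose _, ?_⟩
  · rw [hρ₁, hρ₂, hρ, Matrix.mul_assoc Ψ U₁, Matrix.mul_assoc Ψ U₂, ← Matrix.add_mul,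
      ← Matrix.mul_add, hU₁, hU₂,
      submatrix_castAdd_mul_conjTranspose_add_submatrix_natAdd_mul_conjTranspose,
      ← star_eq_conjTranspose, mem_unitaryGroup_iff.mp hU, Matrix.mul_one]
  · have hblocks : Disjoint (colSpace U₁) (colSpace U₂) := by
      rw [hU₁, hU₂]
      exact disjoint_colSpace_of_conjTranspose_mul_eq_zero
        (conjTranspose_submatrix_castAdd_mul_self hU)
        (conjTranspose_submatrix_castAdd_mul_submatrix_natAdd hU)
    rw [hgram₁, hgram₂, supp_mul_conjTranspose, supp_mul_conjTranspose, colSpace_mul,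
      colSpace_mul, ← Submodule.map_inf _ hΨ, disjoint_iff.mp hblocks, Submodule.map_bot]
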